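/- arXiv:1107.5022 — 5 statements merged into one kernel-verified Lean document; each statement's English description precedes it below -/
import Mathlib

section
/- If there exists a Q-set of size ω₁ (a set Q ⊆ 2^ω of cardinality ℵ₁ such that every subset of Q is a relative G_δ), then there exists a surjection F : 2^ω → 2^{ω₁} such that for every subbasic clopen set C ⊆ 2^{ω₁} (a set of the form {p : p(α) = i} for some α < ω₁ and i ∈ {0,1}), the preimage F⁻¹(C) is either a G_δ or an F_σ subset of 2^ω. -/
/-!
A second countable space `X` carries a Gδ set `U ⊆ 2^ω × X` that is universal for Gδ subsets of
`X`: a code `x` lists, for every `m`, the basic open sets making up the `m`-th open set of a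
Gδ set. Enumerate the Q-set as `q : ω₁ → Q` and put `F x α = [(x, q α) ∈ U]`. The preimage of
`{p | p α = true}` is the Gδ section `{x | (x, q α) ∈ U}`, that of `{p | p α = false}` its
Fσ complement, and `F` is onto because every `{q α | p α = true}` is cut out of `Q` by a Gδ set,
which has a code.
-/

open Cardinal Set Function TopologicalSpace

abbrev CantorSp : Type := ℕ → Bool
abbrev W1 : Type := (Cardinal.aleph 1).ord.ToType
abbrev Big : Type := W1 → Bool

/-- An Fσ set: a countable union of closed sets. -/
def IsFsigma {X : Type} [TopologicalSpace X] (S : Set X) : Prop :=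
  ∃ f : ℕ → Set X, (∀ n, IsClosed (f n)) ∧ S = ⋃ n, f n

theorem IsGδ.isFsigma_compl {X : Type} [TopologicalSpace X] {s : Set X} (hs : IsGδ s) :
    IsFsigma sᶜ := by
  obtain ⟨g, hg, rfl⟩ := hs.eq_iInter_nat
  exact ⟨fun n => (g n)ᶜ, fun n => (hg n).isClosed_compl, compl_iInter g⟩

section UniversalGδ

variable {X : Type*} [TopologicalSpace X]

/-- The section at `x` is the Gδ set `⋂ m, ⋃ {b n | x (Nat.pair m n) = true}` coded by `x`. -/
def universalGδ (b : ℕ → Set X) : Set ((ℕ → Bool) × X) :=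
  ⋂ m, ⋃ n, {x : ℕ → Bool | x (Nat.pair m n) = true} ×ˢ b n

theorem isGδ_universalGδ {b : ℕ → Set X} (hb : ∀ n, IsOpen (b n)) : IsGδ (universalGδ b) :=
  .iInter_of_isOpen fun m => isOpen_iUnion fun n =>
    ((continuous_apply (A := fun _ => Bool) (Nat.pair m n)).isOpen_preimage {true}
      (isOpen_discrete _)).prod (hb n)

theorem exists_preimage_universalGδ_eq {b : ℕ → Set X} (hb : IsTopologicalBasis (range b))
    {G : Set X} (hG : IsGδ G) : ∃ x : ℕ → Bool, (x, ·) ⁻¹' universalGδ b = G := by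
  classical
  obtain ⟨V, hV, rfl⟩ := hG.eq_iInter_nat
  refine ⟨fun k => decide (b (Nat.unpair k).2 ⊆ V (Nat.unpair k).1), ?_⟩
  ext y
  simp only [universalGδ, mem_preimage, mem_iInter, mem_iUnion, mem_prod, mem_ofPred_eq,
    Nat.unpair_pair, decide_eq_true_eq]
  refine forall_congr' fun m => ⟨fun ⟨n, hnV, hyn⟩ => hnV hyn, fun hy => ?_⟩
  obtain ⟨_, ⟨n, rfl⟩, hyn, hnV⟩ := hb.exists_subset_of_mem_open hy (hV m)
  exact ⟨n, hnV, hyn⟩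

theorem exists_isGδ_universal_for_isGδ [SecondCountableTopology X] :
    ∃ U : Set ((ℕ → Bool) × X), IsGδ U ∧
      ∀ G : Set X, IsGδ G → ∃ x : ℕ → Bool, (x, ·) ⁻¹' U = G := by
  obtain ⟨b, hb⟩ := exists_seq_basis X
  exact ⟨universalGδ b, isGδ_universalGδ fun n => hb.isOpen (mem_range_self n),
    fun _ => exists_preimage_universalGδ_eq hb⟩

end UniversalGδ

theorem exists_surjective_forall_isGδ_preimage {X ι : Type*} [TopologicalSpace X]
    [SecondCountableTopology X] (q : ι → X) (hq : ∀ S : Set ι, ∃ G, IsGδ G ∧ q ⁻¹' G = S) :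
    ∃ F : (ℕ → Bool) → ι → Bool, Surjective F ∧ ∀ a, IsGδ (F ⁻¹' {p | p a = true}) := by
  classical
  obtain ⟨U, hU, hUniv⟩ := exists_isGδ_universal_for_isGδ (X := X)
  refine ⟨fun x a => decide ((x, q a) ∈ U), fun p => ?_, fun a => ?_⟩
  · obtain ⟨G, hG, hGS⟩ := hq {a | p a = true}
    obtain ⟨x, hx⟩ := hUniv G hG
    refine ⟨x, funext fun a => ?_⟩
    have : (x, q a) ∈ U ↔ p a = true := by
      rw [← mem_preimage (f := (x, ·)), hx, ← mem_preimage (f := q), hGS, mem_ofPred_eq]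
    rwa [Bool.eq_iff_iff, decide_eq_true_iff]
  · convert hU.preimage (.prodMk_left (q a)) using 1
    ext
    simp

theorem exists_isGδ_preimage_eq_of_injective {X ι : Type*} [TopologicalSpace X] {Q : Set X}
    (hQ : ∀ S ⊆ Q, ∃ G, IsGδ G ∧ G ∩ Q = S) {q : ι → X} (hq : Injective q) (hqQ : range q ⊆ Q)
    (S : Set ι) : ∃ G, IsGδ G ∧ q ⁻¹' G = S := by
  obtain ⟨G, hG, hGQ⟩ := hQ (q '' S) ((image_subset_range q S).trans hqQ)
  refine ⟨G, hG, ?_⟩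
  rw [← hq.preimage_image S, ← hGQ, preimage_inter, preimage_eq_univ_iff.mpr hqQ, inter_univ]

/-- If there is a Q-set of size ℵ₁, then there is a surjection `F : 2^ω → 2^{ω₁}` such that the
preimage of every subbasic clopen set `{p | p α = i}` is Gδ or Fσ. -/
theorem qset_gives_surjection
    (hQ : ∃ Q : Set CantorSp, #Q = Cardinal.aleph 1 ∧
      ∀ X ⊆ Q, ∃ G : Set CantorSp, IsGδ G ∧ G ∩ Q = X) :
    ∃ F : CantorSp → Big, Function.Surjective F ∧
      ∀ (a : W1) (i : Bool),
        IsGδ (F ⁻¹' {p : Big | p a = i}) ∨ IsFsigma (F ⁻¹' {p : Big | p a = i}) := by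
  obtain ⟨Q, hQcard, hQset⟩ := hQ
  obtain ⟨e⟩ : Nonempty (W1 ≃ Q) := Cardinal.eq.mp <| by rw [mk_toType, card_ord, hQcard]
  have hq : Injective (Subtype.val ∘ e) := Subtype.val_injective.comp e.injective
  have hqQ : range (Subtype.val ∘ e) ⊆ Q := range_subset_iff.mpr fun a => (e a).2
  obtain ⟨F, hF, hGδ⟩ := exists_surjective_forall_isGδ_preimage _
    (exists_isGδ_preimage_eq_of_injective hQset hq hqQ)
  refine ⟨F, hF, fun a i => ?_⟩
  cases i with
  | true => exact .inl (hGδ a)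
  | false =>
    right
    have : F ⁻¹' {p : Big | p a = false} = (F ⁻¹' {p : Big | p a = true})ᶜ := by ext; simp
    exact this ▸ (hGδ a).isFsigma_compl
end

section
/- For every ordinal α with 0 < α < ω₂ there exists a set U ⊆ 2^{ω₁} × 2^ω which is Σ*(α) (in the ω₁-Borel hierarchy of the product, generated from clopen boxes) and universal for Σ*(α) subsets of 2^ω: for every Q ⊆ 2^ω in Σ*(α) there exists p ∈ 2^{ω₁} with U_p = {x : (p,x) ∈ U} = Q. Dually, there is a universal Π*(α) set. -/
/-!
Both classes are closed under complements, so it suffices to build universal `Σ*(α)` sets, by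
induction on `α`. A `Σ*(α)` set is a union of `ω₁` sets, each a clopen set or a `Π*(β)` set with
`0 < β < α`; there are at most `ℵ₁` such levels and only countably many clopen subsets of `2^ω`,
so `ℵ₁` parametrised sets (the clopen sets themselves and complements of the universal `Σ*(β)`
sets) have all of these as sections. Splitting the `ω₁` coordinates of a parameter `p ∈ 2^{ω₁}`
into `ω₁` blocks, each with an activation bit, one `ω₁`-union of these parametrised sets encodes
every `ω₁`-union of their sections.
-/

open Cardinal Set

/-- The pair (Σ*(α), Π*(α)) of classes of the ι-indexed Borel hierarchy on X:
level 0 is the clopen sets, Σ*(α) consists of ι-indexed unions of sets from Π*(β), β < α,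
and Π*(α) consists of ι-indexed intersections of sets from Σ*(β), β < α. -/
noncomputable def SigPi (X : Type) [TopologicalSpace X] (ι : Type) :
    Ordinal → Set (Set X) × Set (Set X) :=
  WellFounded.fix (wellFounded_lt (α := Ordinal)) fun α ih =>
    if α = 0 then ({S | IsClopen S}, {S | IsClopen S})
    else
      ({S | ∃ A : ι → Set X, (∀ i, ∃ β, ∃ h : β < α, A i ∈ (ih β h).2) ∧ S = ⋃ i, A i},
       {S | ∃ A : ι → Set X, (∀ i, ∃ β, ∃ h : β < α, A i ∈ (ih β h).1) ∧ S = ⋂ i, A i})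

noncomputable def SigmaStar (X : Type) [TopologicalSpace X] (ι : Type) (α : Ordinal) :
    Set (Set X) := (SigPi X ι α).1

noncomputable def PiStar (X : Type) [TopologicalSpace X] (ι : Type) (α : Ordinal) :
    Set (Set X) := (SigPi X ι α).2

section Hierarchy

variable {X Y : Type} [TopologicalSpace X] [TopologicalSpace Y] {ι : Type}

theorem sigPi_eq (α : Ordinal) :
    SigPi X ι α =
      if α = 0 then ({S | IsClopen S}, {S | IsClopen S})
      else
        ({S | ∃ A : ι → Set X, (∀ i, ∃ β, ∃ _ : β < α, A i ∈ PiStar X ι β) ∧ S = ⋃ i, A i},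
         {S | ∃ A : ι → Set X, (∀ i, ∃ β, ∃ _ : β < α, A i ∈ SigmaStar X ι β) ∧ S = ⋂ i, A i}) :=
  WellFounded.fix_eq _ _ _

theorem sigmaStar_zero : SigmaStar X ι 0 = {S | IsClopen S} := by
  rw [SigmaStar, sigPi_eq, if_pos rfl]

theorem piStar_zero : PiStar X ι 0 = {S | IsClopen S} := by
  rw [PiStar, sigPi_eq, if_pos rfl]

theorem mem_sigmaStar_iff {α : Ordinal} (hα : α ≠ 0) {S : Set X} :
    S ∈ SigmaStar X ι α ↔
      ∃ A : ι → Set X, (∀ i, ∃ β < α, A i ∈ PiStar X ι β) ∧ S = ⋃ i, A i := by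
  rw [SigmaStar, sigPi_eq, if_neg hα]
  simp only [mem_ofPred_eq, exists_prop]

theorem mem_piStar_iff {α : Ordinal} (hα : α ≠ 0) {S : Set X} :
    S ∈ PiStar X ι α ↔
      ∃ A : ι → Set X, (∀ i, ∃ β < α, A i ∈ SigmaStar X ι β) ∧ S = ⋂ i, A i := by
  rw [PiStar, sigPi_eq, if_neg hα]
  simp only [mem_ofPred_eq, exists_prop]

theorem iUnion_mem_sigmaStar {κ : Type*} {α : Ordinal} (hα : α ≠ 0) {e : ι → κ}
    (he : Function.Surjective e) {A : κ → Set X} (hA : ∀ k, ∃ β < α, A k ∈ PiStar X ι β) :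
    ⋃ k, A k ∈ SigmaStar X ι α := by
  rw [mem_sigmaStar_iff hα, ← he.iUnion_comp]
  exact ⟨A ∘ e, fun i => hA (e i), rfl⟩

theorem compl_mem_piStar_and_sigmaStar (α : Ordinal) (S : Set X) :
    (S ∈ SigmaStar X ι α → Sᶜ ∈ PiStar X ι α) ∧ (S ∈ PiStar X ι α → Sᶜ ∈ SigmaStar X ι α) := by
  induction α using WellFoundedLT.induction generalizing S with
  | ind α IH =>
    rcases eq_or_ne α 0 with rfl | hα
    · rw [sigmaStar_zero, piStar_zero]
      exact ⟨IsClopen.compl, IsClopen.compl⟩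
    rw [mem_sigmaStar_iff hα, mem_piStar_iff hα, mem_sigmaStar_iff hα, mem_piStar_iff hα]
    constructor
    · rintro ⟨A, hA, rfl⟩
      refine ⟨fun i => (A i)ᶜ, fun i => ?_, compl_iUnion A⟩
      obtain ⟨β, hβ, hAi⟩ := hA i
      exact ⟨β, hβ, (IH β hβ (A i)).2 hAi⟩
    · rintro ⟨A, hA, rfl⟩
      refine ⟨fun i => (A i)ᶜ, fun i => ?_, compl_iInter A⟩
      obtain ⟨β, hβ, hAi⟩ := hA i
      exact ⟨β, hβ, (IH β hβ (A i)).1 hAi⟩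

theorem inter_preimage_mem_sigmaStar_and_piStar [Nonempty ι] {C : Set X} (hC : IsClopen C)
    {f : X → Y} (hf : Continuous f) (α : Ordinal) (S : Set Y) :
    (S ∈ SigmaStar Y ι α → C ∩ f ⁻¹' S ∈ SigmaStar X ι α) ∧
    (S ∈ PiStar Y ι α → C ∩ f ⁻¹' S ∈ PiStar X ι α) := by
  induction α using WellFoundedLT.induction generalizing S with
  | ind α IH =>
    rcases eq_or_ne α 0 with rfl | hα
    · simp only [sigmaStar_zero, piStar_zero, mem_ofPred_eq]
      exact ⟨fun hS => hC.inter (hS.preimage hf), fun hS => hC.inter (hS.preimage hf)⟩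
    rw [mem_sigmaStar_iff hα, mem_piStar_iff hα, mem_sigmaStar_iff hα, mem_piStar_iff hα]
    constructor
    · rintro ⟨A, hA, rfl⟩
      refine ⟨fun i => C ∩ f ⁻¹' A i, fun i => ?_, by rw [preimage_iUnion, inter_iUnion]⟩
      obtain ⟨β, hβ, hAi⟩ := hA i
      exact ⟨β, hβ, (IH β hβ (A i)).2 hAi⟩
    · rintro ⟨A, hA, rfl⟩
      refine ⟨fun i => C ∩ f ⁻¹' A i, fun i => ?_, by rw [preimage_iInter, inter_iInter]⟩
      obtain ⟨β, hβ, hAi⟩ := hA i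
      exact ⟨β, hβ, (IH β hβ (A i)).1 hAi⟩

end Hierarchy

def IsUniversalFor {P X : Type*} (U : Set (P × X)) (𝒞 : Set (Set X)) : Prop :=
  ∀ Q ∈ 𝒞, ∃ p : P, Prod.mk p ⁻¹' U = Q

theorem IsUniversalFor.compl {P X ι : Type} [TopologicalSpace X] {U : Set (P × X)}
    {β : Ordinal} (hU : IsUniversalFor U (SigmaStar X ι β)) :
    IsUniversalFor Uᶜ (PiStar X ι β) := by
  intro Q hQ
  obtain ⟨p, hp⟩ := hU Qᶜ ((compl_mem_piStar_and_sigmaStar β Q).2 hQ)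
  exact ⟨p, by rw [preimage_compl, hp, compl_compl]⟩

theorem mk_W1 : #W1 = ℵ_ 1 := mk_ord_toType _

instance : Nonempty W1 := Ordinal.nonempty_toType_iff.2 (ord_eq_zero.not.2 (aleph_pos 1).ne')

theorem exists_surjective_of_mk_le_aleph_one {T : Type u} [Nonempty T] (hT : #T ≤ ℵ_ 1) :
    ∃ s : W1 → T, Function.Surjective s := by
  have : lift.{0} #T ≤ lift.{u} #W1 := by simpa [mk_W1, lift_aleph] using hT
  obtain ⟨f⟩ := lift_mk_le'.1 this
  exact ⟨Function.invFun f, Function.invFun_surjective f.injective⟩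

theorem nonempty_prod_option_equiv_W1 : Nonempty ((W1 × W1) × Option W1 ≃ W1) := by
  refine Cardinal.eq.1 ?_
  simp only [mk_prod, mk_option, lift_id, mk_W1]
  rw [mul_eq_self (aleph0_le_aleph 1), add_one_eq (aleph0_le_aleph 1),
    mul_eq_self (aleph0_le_aleph 1)]

theorem exists_universal_sigmaStar_of_piStar_cover {X : Type} [TopologicalSpace X]
    {α : Ordinal} (hα : α ≠ 0) (V : W1 → Set (Big × X))
    (hV : ∀ k, ∃ β < α, V k ∈ PiStar (Big × X) W1 β)
    (hcover : ∀ β < α, ∀ Q ∈ PiStar X W1 β, ∃ k, ∃ p : Big, Prod.mk p ⁻¹' V k = Q) :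
    ∃ U ∈ SigmaStar (Big × X) W1 α, IsUniversalFor U (SigmaStar X W1 α) := by
  obtain ⟨E⟩ := nonempty_prod_option_equiv_W1
  obtain ⟨pair, hpair⟩ := exists_surjective_of_mk_le_aleph_one (T := W1 × W1)
    (by rw [mk_prod, lift_id, mk_W1, mul_eq_self (aleph0_le_aleph 1)])
  let block (p : Big) (j : W1 × W1) : Big := fun m => p (E (j, some m))
  let piece (j : W1 × W1) : Set (Big × X) :=
    {q | q.1 (E (j, none)) = true} ∩ (fun q => (block q.1 j, q.2)) ⁻¹' V j.2
  refine ⟨⋃ j, piece j, iUnion_mem_sigmaStar hα hpair fun j => ?_, ?_⟩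
  · obtain ⟨β, hβ, hVj⟩ := hV j.2
    refine ⟨β, hβ, (inter_preimage_mem_sigmaStar_and_piStar ?_ (by fun_prop) β _).2 hVj⟩
    exact (isClopen_discrete {true}).preimage ((continuous_apply _).comp continuous_fst)
  intro Q hQ
  obtain ⟨A, hA, rfl⟩ := (mem_sigmaStar_iff hα).1 hQ
  choose k r hr using fun i => (hA i).elim fun β hβ => hcover β hβ.1 (A i) hβ.2
  -- the code of `⋃ i, A i`: block `(i, l)` holds `r i` and is active only for `l = k i`
  let code : (W1 × W1) × Option W1 → Bool
    | ((i, l), none) => decide (l = k i)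
    | ((i, _), some m) => r i m
  refine ⟨code ∘ E.symm, ?_⟩
  ext x
  simp only [piece, block, mem_preimage, mem_iUnion, mem_inter_iff, mem_ofPred_eq,
    Function.comp_apply, Equiv.symm_apply_apply, code, decide_eq_true_eq]
  constructor
  · rintro ⟨⟨i, l⟩, rfl : l = k i, hx⟩
    exact ⟨i, by rw [← hr i]; exact hx⟩
  · rintro ⟨i, hx⟩
    exact ⟨(i, k i), rfl, by rw [← hr i] at hx; exact hx⟩

theorem card_le_aleph_one_of_lt_ord_aleph_two {α : Ordinal.{u}} (h : α < (ℵ_ 2).ord) :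
    α.card ≤ ℵ_ 1 := by
  rwa [lt_ord, ← one_add_one_eq_two, ← succ_aleph, Order.lt_succ_iff] at h

open TopologicalSpace in
theorem exists_universal_sigmaStar {α : Ordinal} (h0 : 0 < α) (h2 : α < (ℵ_ 2).ord) :
    ∃ U ∈ SigmaStar (Big × CantorSp) W1 α, IsUniversalFor U (SigmaStar CantorSp W1 α) := by
  induction α using WellFoundedLT.induction with
  | ind α IH =>
  choose U hU hUuniv using fun β : Ioo 0 α => IH β β.2.2 β.2.1 (β.2.2.trans h2)
  -- `Π*(0)` has no universal set, so each clopen set is the section of its own family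
  let V : Clopens CantorSp ⊕ Ioo 0 α → Set (Big × CantorSp)
    | .inl C => Prod.snd ⁻¹' C
    | .inr β => (U β)ᶜ
  have hcard : #(Clopens CantorSp ⊕ Ioo 0 α) ≤ ℵ_ 1 := by
    have : Countable (Clopens CantorSp) :=
      Clopens.countable_iff_secondCountable.2 inferInstance
    rw [mk_sum]
    refine add_le_of_le (aleph0_le_aleph 1) ?_ ?_
    · simpa [lift_aleph] using (mk_le_aleph0 (α := Clopens CantorSp)).trans (aleph0_le_aleph 1)
    · rw [lift_uzero]
      calc #(Ioo 0 α) ≤ #(Iio α) := mk_le_mk_of_subset Ioo_subset_Iio_self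
        _ = lift α.card := mk_Iio_ordinal α
        _ ≤ lift (ℵ_ 1) := lift_le.2 (card_le_aleph_one_of_lt_ord_aleph_two h2)
        _ = ℵ_ 1 := by simp [lift_aleph]
  have hV : ∀ t, ∃ β < α, V t ∈ PiStar (Big × CantorSp) W1 β
    | .inl C => ⟨0, h0, by rw [piStar_zero]; exact C.isClopen.preimage continuous_snd⟩
    | .inr β => ⟨β, β.2.2, (compl_mem_piStar_and_sigmaStar _ _).1 (hU β)⟩
  obtain ⟨s, hs⟩ := exists_surjective_of_mk_le_aleph_one hcard
  refine exists_universal_sigmaStar_of_piStar_cover h0.ne' (V ∘ s) (fun k => hV (s k)) ?_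
  intro β hβ Q hQ
  rcases eq_or_ne β 0 with rfl | hβ0
  · obtain ⟨k, hk⟩ := hs (.inl ⟨Q, by rwa [piStar_zero] at hQ⟩)
    exact ⟨k, fun _ => false, by simp only [Function.comp_apply, hk, V]; rfl⟩
  · obtain ⟨k, hk⟩ := hs (.inr ⟨β, pos_iff_ne_zero.2 hβ0, hβ⟩)
    obtain ⟨p, hp⟩ := (hUuniv ⟨β, pos_iff_ne_zero.2 hβ0, hβ⟩).compl Q hQ
    exact ⟨k, p, by simpa [hk, V] using hp⟩

/-- For every `0 < α < ω₂` there is a `Σ*(α)` subset of `2^{ω₁} × 2^ω` universal for `Σ*(α)`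
subsets of `2^ω`, and dually a universal `Π*(α)` set. -/
theorem universal_sets_exist (α : Ordinal) (h0 : 0 < α) (h2 : α < (Cardinal.aleph 2).ord) :
    (∃ U ∈ SigmaStar (Big × CantorSp) W1 α,
      ∀ Q ∈ SigmaStar CantorSp W1 α, ∃ p : Big, {x : CantorSp | (p, x) ∈ U} = Q) ∧
    (∃ U ∈ PiStar (Big × CantorSp) W1 α,
      ∀ Q ∈ PiStar CantorSp W1 α, ∃ p : Big, {x : CantorSp | (p, x) ∈ U} = Q) := by
  obtain ⟨U, hU, hUuniv⟩ := exists_universal_sigmaStar h0 h2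
  exact ⟨⟨U, hU, hUuniv⟩, Uᶜ, (compl_mem_piStar_and_sigmaStar α U).1 hU, hUuniv.compl⟩
end

section
/- In the Steel forcing poset Q(α), the retagging lemma holds: if p₁, p₂ ∈ Q(α), β + 1 ≤ α, and p₁(β+1) = p₂(β+1), then for every q₁ ≤ p₁ there exists q₂ ≤ p₂ with q₁(β) = q₂(β). -/
open Cardinal Set

/-- Order on tags in `α ∪ {∞}` (`none` is `∞`): `TagLT a b` means `a < b`, where `∞ < ∞` holds
and `γ < ∞` for every ordinal `γ`. -/
def TagLT : Option Ordinal → Option Ordinal → Prop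
  | _, none => True
  | none, some _ => False
  | some x, some y => x < y

/-- A condition of Steel forcing `Q(α)`: a finite subtree `t` of `ω^{<ω}` together with a
rank-function tagging `h : t → α ∪ {∞}` (`none` codes `∞`; `h` is irrelevant off `t`). -/
structure SteelCond (α : Ordinal) where
  t : Finset (List ℕ)
  tree : ∀ s ∈ t, ∀ s' : List ℕ, s' <+: s → s' ∈ t
  h : List ℕ → Option Ordinal
  tag_lt : ∀ s ∈ t, ∀ γ : Ordinal, h s = some γ → γ < α
  rank : ∀ s ∈ t, ∀ s' ∈ t, s' <+: s → s' ≠ s → TagLT (h s) (h s')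

/-- `p` extends `q` in Steel forcing. -/
def SteelLE {α : Ordinal} (p q : SteelCond α) : Prop :=
  q.t ⊆ p.t ∧ ∀ s ∈ q.t, p.h s = q.h s

/-- `p(β)`: the condition `p` with every tag `≥ ω·β` replaced by `∞`, recorded as its
underlying data (tree together with the retagging, normalized to `none` off the tree). -/
noncomputable def SteelCond.cut {α : Ordinal} (p : SteelCond α) (β : Ordinal) :
    Finset (List ℕ) × (List ℕ → Option Ordinal) :=
  (p.t, fun s => if s ∈ p.t then
      (p.h s).bind (fun γ => if γ < Ordinal.omega0 * β then some γ else none)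
    else none)

/-!
Write `T` for the common tree of `p₁` and `p₂`; their tags agree below `ω·(β+1) = ω·β + ω`.
If `α ≤ ω·(β+1)` every tag lies below this bound, so `p₁` and `p₂` coincide and `q₂ = q₁` works.
Otherwise retag `q₁`: on `T` use the tags of `p₂`; off `T` keep the tags of `q₁` below `ω·β + ω`
and replace every other tag (`≥ ω·β + ω` or `∞`) of a node `s` by `ω·β + (m + (N - |s|))`, where
`N` bounds the lengths of the nodes of `q₁` and `ω·β + m` bounds its kept tags. The new tags are
`≥ ω·β`, so `q₂(β) = q₁(β)`; they are `< ω·β + ω ≤ α`, decrease along branches and exceed all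
kept tags. They also stay below the `p₂`-tag of every ancestor in `T`: that ancestor's `p₁`-tag is
`≥ ω·β + ω` or `∞`, and `p₂` agrees with `p₁` below `ω·β + ω`.
-/

open Ordinal

noncomputable def tagCut (c : Ordinal) (x : Option Ordinal) : Option Ordinal :=
  x.bind fun γ => if γ < c then some γ else none

section Tags

variable {a c d γ : Ordinal} {x y : Option Ordinal}

@[simp] lemma tagLT_none_right (x : Option Ordinal) : TagLT x none := by
  cases x <;> trivial

@[simp] lemma tagLT_none_left_iff : TagLT none y ↔ y = none := by
  cases y <;> simp [TagLT]

@[simp] lemma tagLT_some_some_iff : TagLT (some γ) (some d) ↔ γ < d := Iff.rfl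

lemma tagLT_some_right_iff : TagLT x (some d) ↔ ∃ γ, x = some γ ∧ γ < d := by
  cases x <;> simp [TagLT]

@[simp] lemma tagCut_none : tagCut c none = none := rfl

lemma tagCut_some : tagCut c (some γ) = if γ < c then some γ else none := rfl

lemma tagCut_eq_some_iff : tagCut c x = some γ ↔ x = some γ ∧ γ < c := by
  cases x with
  | none => simp
  | some δ => by_cases hδ : δ < c <;> simp [tagCut_some, hδ] <;> grind

lemma tagCut_eq_self (h : ∀ γ, x = some γ → γ < c) : tagCut c x = x := by
  cases x with
  | none => rfl
  | some γ => simp [tagCut_some, h γ rfl]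

lemma tagCut_tagCut (h : c ≤ d) (x : Option Ordinal) : tagCut c (tagCut d x) = tagCut c x := by
  cases x with
  | none => rfl
  | some γ =>
    by_cases hd : γ < d
    · simp [tagCut_some, hd]
    · have hc : ¬γ < c := fun hc => hd (hc.trans_le h)
      simp [tagCut_some, hd, hc]

lemma tagCut_getD_lt (hd : d < c) : (tagCut c x).getD d < c := by
  cases hx : tagCut c x with
  | none => exact hd
  | some γ => exact (tagCut_eq_some_iff.1 hx).2

lemma tagCut_some_getD_tagCut (hc : a ≤ c) (hd : a ≤ d) (x : Option Ordinal) :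
    tagCut a (some ((tagCut c x).getD d)) = tagCut a x := by
  have hda : ¬d < a := not_lt.2 hd
  cases x with
  | none => simp [tagCut_some, hda]
  | some γ =>
    by_cases hγ : γ < c
    · simp [tagCut_some, hγ]
    · have hγa : ¬γ < a := fun h => hγ (h.trans_le hc)
      simp [tagCut_some, hγ, hda, hγa]

lemma tagLT_tagCut (h : TagLT x y) : TagLT (tagCut c x) (tagCut c y) := by
  match x, y, h with
  | _, none, _ => simp
  | some γ, some δ, (h : γ < δ) =>
    by_cases hδ : δ < c
    · simp [tagCut_some, hδ, h.trans hδ, h]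
    · by_cases hγ : γ < c <;> simp [tagCut_some, hγ, hδ]

lemma tagLT_some_getD (d : Ordinal) (h : TagLT x y) : TagLT (some (x.getD d)) y := by
  cases x with
  | none => simp [tagLT_none_left_iff.1 h]
  | some γ => exact h

lemma tagLT_of_tagLT_tagCut (hγ : γ < c) (h : TagLT (some γ) (tagCut c y)) :
    TagLT (some γ) y := by
  cases y with
  | none => simp
  | some δ =>
    by_cases hδ : δ < c
    · simpa [tagCut_some, hδ] using h
    · exact hγ.trans_le (not_lt.1 hδ)

end Tags

lemma SteelCond.cut_eq {α : Ordinal} (p : SteelCond α) (β : Ordinal) :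
    p.cut β = (p.t, fun s => if s ∈ p.t then tagCut (ω * β) (p.h s) else none) := rfl

lemma SteelCond.cut_eq_cut_iff {α β : Ordinal} {p q : SteelCond α} :
    p.cut β = q.cut β ↔
      p.t = q.t ∧ ∀ s ∈ p.t, tagCut (ω * β) (p.h s) = tagCut (ω * β) (q.h s) := by
  simp only [SteelCond.cut_eq, Prod.mk.injEq, funext_iff]
  constructor
  · rintro ⟨hpq, h⟩
    exact ⟨hpq, fun s hs => by simpa [hs, ← hpq] using h s⟩
  · rintro ⟨hpq, h⟩
    refine ⟨hpq, fun s => ?_⟩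
    by_cases hs : s ∈ p.t
    · simpa [hs, ← hpq] using h s hs
    · simp [hs, ← hpq]

lemma Ordinal.lt_add_omega0_iff {a γ : Ordinal} : γ < a + ω ↔ ∃ n : ℕ, γ < a + n := by
  rw [lt_add_iff_of_isSuccLimit isSuccLimit_omega0]
  constructor
  · rintro ⟨d, hd, hγ⟩
    obtain ⟨n, rfl⟩ := lt_omega0.1 hd
    exact ⟨n, hγ⟩
  · rintro ⟨n, hγ⟩
    exact ⟨n, natCast_lt_omega0 n, hγ⟩

lemma Ordinal.exists_nat_forall_lt_add {ι : Type*} {a : Ordinal} (t : Finset ι) (g : ι → Ordinal)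
    (hg : ∀ i ∈ t, g i < a + ω) : ∃ m : ℕ, ∀ i ∈ t, g i < a + m := by
  choose! n hn using fun i hi => lt_add_omega0_iff.1 (hg i hi)
  refine ⟨t.sup n, fun i hi => (hn i hi).trans_le ?_⟩
  gcongr
  exact_mod_cast Finset.le_sup hi

section Retag

variable {α c : Ordinal} {p₁ p₂ q : SteelCond α} {f : List ℕ → Ordinal}

noncomputable def retagFun (p₂ q : SteelCond α) (c : Ordinal) (f : List ℕ → Ordinal)
    (s : List ℕ) : Option Ordinal :=
  if s ∈ p₂.t then p₂.h s else some ((tagCut c (q.h s)).getD (f s))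

lemma retagFun_tag_lt (hc : c ≤ α) (hf_lt : ∀ s, f s < c) :
    ∀ s ∈ q.t, ∀ γ, retagFun p₂ q c f s = some γ → γ < α := by
  intro s hs γ hγ
  by_cases hsT : s ∈ p₂.t
  · rw [retagFun, if_pos hsT] at hγ
    exact p₂.tag_lt s hsT γ hγ
  rw [retagFun, if_neg hsT, Option.some_inj] at hγ
  subst hγ
  cases hx : tagCut c (q.h s) with
  | none => exact (hf_lt s).trans_le hc
  | some γ => exact q.tag_lt s hs γ (tagCut_eq_some_iff.1 hx).1

lemma retagFun_rank (hT : p₁.t = p₂.t)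
    (hagree : ∀ s ∈ p₁.t, tagCut c (p₁.h s) = tagCut c (p₂.h s)) (hq : SteelLE q p₁)
    (hf_lt : ∀ s, f s < c) (hf_anti : ∀ s ∈ q.t, ∀ s', s' <+: s → s' ≠ s → f s < f s')
    (hf_kept : ∀ s ∈ q.t, ∀ γ, tagCut c (q.h s) = some γ → ∀ s', γ < f s') :
    ∀ s ∈ q.t, ∀ s' ∈ q.t, s' <+: s → s' ≠ s →
      TagLT (retagFun p₂ q c f s) (retagFun p₂ q c f s') := by
  intro s hs s' hs' hpre hne
  have hcut : TagLT (tagCut c (q.h s)) (tagCut c (q.h s')) :=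
    tagLT_tagCut (q.rank s hs s' hs' hpre hne)
  by_cases hsT : s ∈ p₂.t
  · have hs'T : s' ∈ p₂.t := p₂.tree s hsT s' hpre
    simpa [retagFun, hsT, hs'T] using p₂.rank s hsT s' hs'T hpre hne
  by_cases hs'T : s' ∈ p₂.t
  · rw [hq.2 s' (hT ▸ hs'T), hagree s' (hT ▸ hs'T)] at hcut
    simp only [retagFun, hsT, hs'T, if_false, if_true]
    exact tagLT_of_tagLT_tagCut (tagCut_getD_lt (hf_lt s)) (tagLT_some_getD _ hcut)
  simp only [retagFun, hsT, hs'T, if_false, tagLT_some_some_iff]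
  cases hx' : tagCut c (q.h s') with
  | none =>
    cases hx : tagCut c (q.h s) with
    | none => exact hf_anti s hs s' hpre hne
    | some γ => exact hf_kept s hs γ hx s'
  | some γ' =>
    rw [hx', tagLT_some_right_iff] at hcut
    obtain ⟨γ, hx, hγ⟩ := hcut
    simpa [hx] using hγ

lemma exists_steelLE_cut_eq_of_tagCut_eq {β : Ordinal} (hT : p₁.t = p₂.t)
    (hagree : ∀ s ∈ p₁.t, tagCut c (p₁.h s) = tagCut c (p₂.h s)) (hq : SteelLE q p₁)
    (hc : c ≤ α) (hβc : ω * β ≤ c) (hf_ge : ∀ s, ω * β ≤ f s) (hf_lt : ∀ s, f s < c)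
    (hf_anti : ∀ s ∈ q.t, ∀ s', s' <+: s → s' ≠ s → f s < f s')
    (hf_kept : ∀ s ∈ q.t, ∀ γ, tagCut c (q.h s) = some γ → ∀ s', γ < f s') :
    ∃ q₂ : SteelCond α, SteelLE q₂ p₂ ∧ q.cut β = q₂.cut β := by
  refine ⟨⟨q.t, q.tree, retagFun p₂ q c f, retagFun_tag_lt hc hf_lt,
    retagFun_rank hT hagree hq hf_lt hf_anti hf_kept⟩, ⟨hT ▸ hq.1, fun s hs => if_pos hs⟩,
    SteelCond.cut_eq_cut_iff.2 ⟨rfl, fun s hs => ?_⟩⟩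
  change tagCut _ (q.h s) = tagCut _ (retagFun p₂ q c f s)
  by_cases hsT : s ∈ p₂.t
  · rw [retagFun, if_pos hsT, ← tagCut_tagCut hβc (p₂.h s), ← hagree s (hT ▸ hsT),
      tagCut_tagCut hβc, hq.2 s (hT ▸ hsT)]
  · rw [retagFun, if_neg hsT, tagCut_some_getD_tagCut hβc (hf_ge s)]

end Retag

lemma SteelCond.exists_tags_between_add_omega0 {α : Ordinal} (q : SteelCond α) (a : Ordinal) :
    ∃ f : List ℕ → Ordinal, (∀ s, a ≤ f s) ∧ (∀ s, f s < a + ω) ∧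
      (∀ s ∈ q.t, ∀ s', s' <+: s → s' ≠ s → f s < f s') ∧
      ∀ s ∈ q.t, ∀ γ, tagCut (a + ω) (q.h s) = some γ → ∀ s', γ < f s' := by
  obtain ⟨m, hm⟩ := exists_nat_forall_lt_add q.t (fun s => (tagCut (a + ω) (q.h s)).getD a)
    fun s _ => tagCut_getD_lt (lt_add_of_pos_right a omega0_pos)
  set N := q.t.sup List.length
  refine ⟨fun s => a + ((m + (N - s.length) : ℕ) : Ordinal), fun s => le_self_add,
    fun s => (add_lt_add_iff_left a).2 (natCast_lt_omega0 _), ?_, ?_⟩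
  · intro s hs s' hpre hne
    have hlen : s'.length < s.length := lt_of_le_of_ne hpre.length_le (mt hpre.eq_of_length hne)
    have hN : s.length ≤ N := Finset.le_sup (f := List.length) hs
    have hnat : m + (N - s.length) < m + (N - s'.length) := by omega
    exact (add_lt_add_iff_left a).2 (Nat.cast_lt.2 hnat)
  · intro s hs γ hγ s'
    have hγm : γ < a + m := by simpa [hγ] using hm s hs
    exact hγm.trans_le ((add_le_add_iff_left a).2 (Nat.cast_le.2 (Nat.le_add_right _ _)))

lemma steelLE_of_cut_eq_of_le {α β : Ordinal} {p₁ p₂ q : SteelCond α} (hα : α ≤ ω * β)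
    (hpp : p₁.cut β = p₂.cut β) (hq : SteelLE q p₁) : SteelLE q p₂ := by
  obtain ⟨hT, hagree⟩ := SteelCond.cut_eq_cut_iff.1 hpp
  refine ⟨hT ▸ hq.1, fun s hs => ?_⟩
  have hs₁ : s ∈ p₁.t := hT ▸ hs
  rw [hq.2 s hs₁, ← tagCut_eq_self fun γ hγ => (p₁.tag_lt s hs₁ γ hγ).trans_le hα, hagree s hs₁,
    tagCut_eq_self fun γ hγ => (p₂.tag_lt s hs γ hγ).trans_le hα]

theorem steel_retagging_general (α β : Ordinal) (p₁ p₂ : SteelCond α)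
    (hpp : p₁.cut (β + 1) = p₂.cut (β + 1)) (q₁ : SteelCond α) (hq₁ : SteelLE q₁ p₁) :
    ∃ q₂ : SteelCond α, SteelLE q₂ p₂ ∧ q₁.cut β = q₂.cut β := by
  rcases le_total α (ω * (β + 1)) with hα | hα
  · exact ⟨q₁, steelLE_of_cut_eq_of_le hα hpp hq₁, rfl⟩
  obtain ⟨hT, hagree⟩ := SteelCond.cut_eq_cut_iff.1 hpp
  rw [mul_add_one] at hα hagree
  obtain ⟨f, hf_ge, hf_lt, hf_anti, hf_kept⟩ := q₁.exists_tags_between_add_omega0 (ω * β)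
  exact exists_steelLE_cut_eq_of_tagCut_eq hT hagree hq₁ hα le_self_add hf_ge hf_lt hf_anti hf_kept

/-- The retagging lemma for Steel forcing: if `β + 1 ≤ α` and `p₁(β+1) = p₂(β+1)`, then every
`q₁ ≤ p₁` admits `q₂ ≤ p₂` with `q₁(β) = q₂(β)`. -/
theorem steel_retagging (α β : Ordinal) (hβ : β + 1 ≤ α) (p₁ p₂ : SteelCond α)
    (hpp : p₁.cut (β + 1) = p₂.cut (β + 1)) (q₁ : SteelCond α) (hq₁ : SteelLE q₁ p₁) :
    ∃ q₂ : SteelCond α, SteelLE q₂ p₂ ∧ q₁.cut β = q₂.cut β :=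
  steel_retagging_general α β p₁ p₂ hpp q₁ hq₁
end

section
/- In Steel forcing Q(α): for a condition p = (t_p, h_p) and σ ∈ ω^{<ω}, p forces σ ∈ T iff σ = ⟨⟩, or σ ∈ t_p, or the immediate predecessor τ of σ is in t_p with h_p(τ) > 0; and p forces σ ∉ T iff there exists an initial segment τ ⊆ σ with τ ∈ t_p and h_p(τ) < |σ| − |τ|. Consequently, both relations are determined by p(1), so if p(1) = q(1) then p and q force the same membership facts about clopen sets containing the generic tree T. -/
open Cardinal Set

/-- `p ⊩ σ ∈ T`: densely below `p`, `σ` belongs to the finite tree of the condition. -/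
def ForcesIn {α : Ordinal} (p : SteelCond α) (σ : List ℕ) : Prop :=
  ∀ q : SteelCond α, SteelLE q p → ∃ r : SteelCond α, SteelLE r q ∧ σ ∈ r.t

/-- `p ⊩ σ ∉ T`: no extension of `p` puts `σ` into its finite tree. -/
def ForcesOut {α : Ordinal} (p : SteelCond α) (σ : List ℕ) : Prop :=
  ∀ r : SteelCond α, SteelLE r p → σ ∉ r.t

/-!
Tags strictly decrease along the branches of a condition, so a node tagged `γ` has at most `γ`
nodes strictly above it on any branch of any extension: this forces `σ ∉ T` as soon as some
`τ ⊆ σ` in `t_p` has `h_p(τ) < |σ| - |τ|`. Conversely, if every such `τ` leaves enough room,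
the missing prefixes of `σ` can be added with finite tags (or `∞` above an `∞`). For `σ ∈ T`, the
only obstruction is a node below `σ` tagged `0`: either the parent of `σ` already has tag `0` in
`p`, or, if the parent is missing, one extends `p` by a new node below `σ` with tag `0`.
All these criteria only look at finite tags, which are exactly what `p(1)` records.
-/

theorem TagLT.trans {a b c : Option Ordinal} (hab : TagLT a b) (hbc : TagLT b c) : TagLT a c := by
  cases a <;> cases b <;> cases c <;> simp only [TagLT] at *
  exact hab.trans hbc

theorem tagLT_some_zero {o : Option Ordinal} (h : o ≠ some 0) : TagLT (some 0) o := by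
  cases o with
  | none => trivial
  | some γ => exact pos_iff_ne_zero.mpr fun h0 => h (h0 ▸ rfl)

theorem List.IsPrefix.prefix_dropLast_of_ne {β : Type*} {l₁ l₂ : List β} (h : l₁ <+: l₂)
    (hne : l₁ ≠ l₂) : l₁ <+: l₂.dropLast := by
  have hlt : l₁.length < l₂.length := h.length_le.lt_of_ne fun e => hne (h.eq_of_length e)
  exact List.prefix_of_prefix_length_le h (List.dropLast_prefix l₂)
    (by rw [List.length_dropLast]; omega)

theorem SteelLE.refl {α : Ordinal} (p : SteelCond α) : SteelLE p p :=
  ⟨subset_rfl, fun _ _ => rfl⟩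

theorem SteelLE.trans {α : Ordinal} {r q p : SteelCond α} (hrq : SteelLE r q)
    (hqp : SteelLE q p) : SteelLE r p :=
  ⟨hqp.1.trans hrq.1, fun s hs => (hrq.2 s (hqp.1 hs)).trans (hqp.2 s hs)⟩

namespace SteelCond

variable {α : Ordinal}

/-- `σ` can be added to `q` as a new node with tag `o`. -/
def AdmitsLeaf (q : SteelCond α) (σ : List ℕ) (o : Option Ordinal) : Prop :=
  ∀ s, s <+: σ → s ≠ σ → s ∈ q.t ∧ TagLT o (q.h s)

theorem admitsLeaf_nil (q : SteelCond α) (o : Option Ordinal) : q.AdmitsLeaf [] o :=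
  fun _ hs hne => absurd (List.prefix_nil.mp hs) hne

theorem admitsLeaf_of_dropLast {q : SteelCond α} {σ : List ℕ} {o : Option Ordinal}
    (hd : σ.dropLast ∈ q.t) (ho : TagLT o (q.h σ.dropLast)) : q.AdmitsLeaf σ o := by
  intro s hs hne
  have hsd := hs.prefix_dropLast_of_ne hne
  refine ⟨q.tree _ hd s hsd, ?_⟩
  by_cases he : s = σ.dropLast
  · exact he ▸ ho
  · exact ho.trans (q.rank _ hd s (q.tree _ hd s hsd) hsd he)

def insert (q : SteelCond α) (σ : List ℕ) (o : Option Ordinal) (hσ : σ ∉ q.t)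
    (ho : ∀ γ, o = some γ → γ < α) (hadm : q.AdmitsLeaf σ o) : SteelCond α where
  t := Insert.insert σ q.t
  h := Function.update q.h σ o
  tree := by
    intro s hs s' hs'
    rcases Finset.mem_insert.mp hs with rfl | hs
    · by_cases he : s' = s
      · exact he ▸ Finset.mem_insert_self _ _
      · exact Finset.mem_insert_of_mem (hadm s' hs' he).1
    · exact Finset.mem_insert_of_mem (q.tree s hs s' hs')
  tag_lt := by
    intro s hs γ hγ
    by_cases he : s = σ
    · subst he; exact ho γ (by simpa using hγ)
    · rw [Function.update_of_ne he] at hγ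
      exact q.tag_lt s ((Finset.mem_insert.mp hs).resolve_left he) γ hγ
  rank := by
    intro s hs s' hs' hpre hne
    by_cases he : s = σ
    · subst he
      rw [Function.update_self, Function.update_of_ne hne]
      exact (hadm s' hpre hne).2
    · have hsq := (Finset.mem_insert.mp hs).resolve_left he
      -- `σ` is not below any node of `q`, since `q.t` is closed under prefixes
      have hs'σ : s' ≠ σ := fun e => hσ (e ▸ q.tree s hsq s' hpre)
      rw [Function.update_of_ne he, Function.update_of_ne hs'σ]
      exact q.rank s hsq s' ((Finset.mem_insert.mp hs').resolve_left hs'σ) hpre hne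

section insert

variable {q : SteelCond α} {σ : List ℕ} {o : Option Ordinal} {hσ : σ ∉ q.t}
  {ho : ∀ γ, o = some γ → γ < α} {hadm : q.AdmitsLeaf σ o}

theorem insert_le : SteelLE (q.insert σ o hσ ho hadm) q :=
  ⟨Finset.subset_insert _ _,
    fun s hs => Function.update_of_ne (fun e : s = σ => hσ (e ▸ hs)) _ _⟩

theorem mem_insert_t : σ ∈ (q.insert σ o hσ ho hadm).t := Finset.mem_insert_self _ _

theorem insert_h : (q.insert σ o hσ ho hadm).h σ = o := Function.update_self _ _ _

end insert

theorem exists_le_mem_of_admitsLeaf (q : SteelCond α) {σ : List ℕ} {o : Option Ordinal}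
    (ho : ∀ γ, o = some γ → γ < α) (hadm : q.AdmitsLeaf σ o) :
    ∃ r : SteelCond α, SteelLE r q ∧ σ ∈ r.t := by
  by_cases hσ : σ ∈ q.t
  · exact ⟨q, .refl q, hσ⟩
  · exact ⟨q.insert σ o hσ ho hadm, insert_le, mem_insert_t⟩

theorem exists_tag_add_le (r : SteelCond α) {σ τ : List ℕ} (hσ : σ ∈ r.t) (hτσ : τ <+: σ)
    {γ : Ordinal} (hγ : r.h τ = some γ) :
    ∃ δ, r.h σ = some δ ∧ δ + ((σ.length - τ.length : ℕ) : Ordinal) ≤ γ := by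
  induction σ using List.reverseRecOn with
  | nil => exact ⟨γ, List.prefix_nil.mp hτσ ▸ hγ, by simp⟩
  | append_singleton l a ih =>
    by_cases he : τ = l ++ [a]
    · subst he; exact ⟨γ, hγ, by simp⟩
    have hτl : τ <+: l := by simpa using hτσ.prefix_dropLast_of_ne he
    have hl : l ∈ r.t := r.tree _ hσ l (List.prefix_append l [a])
    obtain ⟨δ', hδ', hle⟩ := ih hl hτl
    have hrank := r.rank _ hσ l hl (List.prefix_append l [a]) (by simp)
    rw [hδ'] at hrank
    cases hσh : r.h (l ++ [a]) with
    | none => simp [hσh, TagLT] at hrank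
    | some δ =>
      rw [hσh] at hrank
      have hlen : (l ++ [a]).length - τ.length = 1 + (l.length - τ.length) := by
        simp only [List.length_append, List.length_singleton]
        have := hτl.length_le
        omega
      refine ⟨δ, rfl, ?_⟩
      calc δ + (((l ++ [a]).length - τ.length : ℕ) : Ordinal)
          = δ + 1 + ((l.length - τ.length : ℕ) : Ordinal) := by
            rw [hlen, Nat.cast_add, Nat.cast_one, add_assoc]
        _ ≤ δ' + ((l.length - τ.length : ℕ) : Ordinal) :=
            add_le_add_left (Order.add_one_le_of_lt hrank) _
        _ ≤ γ := hle

theorem forcesOut_of_tag_lt (p : SteelCond α) {σ τ : List ℕ} (hτ : τ ∈ p.t) (hτσ : τ <+: σ)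
    {γ : Ordinal} (hγ : p.h τ = some γ) (hlt : γ < ((σ.length - τ.length : ℕ) : Ordinal)) :
    ForcesOut p σ := by
  intro r hr hσ
  obtain ⟨δ, -, hle⟩ := r.exists_tag_add_le hσ hτσ ((hr.2 τ hτ).trans hγ)
  exact hlt.not_ge (le_add_self.trans hle)

theorem exists_insert_tag_ge {r : SteelCond α} {σ : List ℕ} (m : ℕ) (hσ : σ ∉ r.t)
    (hd : σ.dropLast ∈ r.t) (hm : ∀ γ, r.h σ.dropLast = some γ → ((m + 1 : ℕ) : Ordinal) ≤ γ) :
    ∃ r' : SteelCond α, SteelLE r' r ∧ σ ∈ r'.t ∧ (∀ s ∈ r'.t, s ∈ r.t ∨ s = σ) ∧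
      ∀ γ, r'.h σ = some γ → (m : Ordinal) ≤ γ := by
  -- the new node gets the finite tag `m`, or `∞` if its parent is tagged `∞`
  let o : Option Ordinal := (r.h σ.dropLast).map fun _ => (m : Ordinal)
  have hmo : ∀ γ, r.h σ.dropLast = some γ → (m : Ordinal) < γ := fun γ h =>
    (Nat.cast_lt.mpr m.lt_succ_self).trans_le (hm γ h)
  have hoα : ∀ γ, o = some γ → γ < α := by
    intro γ hγ
    obtain ⟨γ', h, rfl⟩ := Option.map_eq_some_iff.mp hγ
    exact (hmo γ' h).trans (r.tag_lt _ hd γ' h)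
  have hadm : r.AdmitsLeaf σ o := by
    refine admitsLeaf_of_dropLast hd ?_
    cases h : r.h σ.dropLast with
    | none => trivial
    | some γ => simpa [o, h, TagLT] using hmo γ h
  refine ⟨r.insert σ o hσ hoα hadm, insert_le, mem_insert_t,
    fun s hs => (Finset.mem_insert.mp hs).symm, fun γ hγ => ?_⟩
  rw [insert_h] at hγ
  obtain ⟨_, _, rfl⟩ := Option.map_eq_some_iff.mp hγ
  exact le_rfl

/-- The slack `m` above `σ` is what lets the induction on `σ` go through. -/
theorem exists_le_mem_of_tags_ge (σ : List ℕ) (m : ℕ) (p : SteelCond α)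
    (hp : ∀ τ ∈ p.t, τ <+: σ → ∀ γ, p.h τ = some γ →
      ((σ.length - τ.length + m : ℕ) : Ordinal) ≤ γ) :
    ∃ r : SteelCond α, SteelLE r p ∧ σ ∈ r.t ∧ (∀ s ∈ r.t, s ∈ p.t ∨ s <+: σ) ∧
      ∀ γ, r.h σ = some γ → (m : Ordinal) ≤ γ := by
  by_cases hσ : σ ∈ p.t
  · exact ⟨p, .refl p, hσ, fun s hs => .inl hs,
      fun γ hγ => by simpa using hp σ hσ List.prefix_rfl γ hγ⟩
  induction σ using List.reverseRecOn generalizing m with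
  | nil =>
    refine ⟨p.insert [] none hσ (by simp) (admitsLeaf_nil p none), insert_le, mem_insert_t,
      fun s hs => ?_, by simp [insert_h]⟩
    rcases Finset.mem_insert.mp hs with rfl | hs
    exacts [.inr List.prefix_rfl, .inl hs]
  | append_singleton l a ih =>
    have hpl : ∀ τ ∈ p.t, τ <+: l → ∀ γ, p.h τ = some γ →
        ((l.length - τ.length + (m + 1) : ℕ) : Ordinal) ≤ γ := by
      intro τ hτ hτl γ hγ
      have hlen : (l ++ [a]).length - τ.length + m = l.length - τ.length + (m + 1) := by
        simp only [List.length_append, List.length_singleton]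
        have := hτl.length_le
        omega
      exact hlen ▸ hp τ hτ (hτl.trans (List.prefix_append l [a])) γ hγ
    obtain ⟨r', hr'p, hlr', hr'new, hr'l⟩ : ∃ r' : SteelCond α, SteelLE r' p ∧ l ∈ r'.t ∧
        (∀ s ∈ r'.t, s ∈ p.t ∨ s <+: l) ∧ ∀ γ, r'.h l = some γ → ((m + 1 : ℕ) : Ordinal) ≤ γ := by
      by_cases hl : l ∈ p.t
      · exact ⟨p, .refl p, hl, fun s hs => .inl hs,
          fun γ hγ => by simpa using hpl l hl List.prefix_rfl γ hγ⟩
      · exact ih (m + 1) hpl hl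
    have hσr' : l ++ [a] ∉ r'.t := fun h => by
      rcases hr'new _ h with h | h
      · exact hσ h
      · simpa using h.length_le
    obtain ⟨r, hrr', hσr, hrnew, hrσ⟩ :=
      exists_insert_tag_ge m hσr' (by simpa using hlr') (by simpa using hr'l)
    refine ⟨r, hrr'.trans hr'p, hσr, fun s hs => ?_, hrσ⟩
    rcases hrnew s hs with hs | rfl
    · exact (hr'new s hs).imp_right fun h => h.trans (List.prefix_append l [a])
    · exact .inr List.prefix_rfl

theorem exists_le_tag_eq_zero (hα : 0 < α) (p : SteelCond α) {ρ : List ℕ} (hρ : ρ ∉ p.t) :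
    ∃ q : SteelCond α, SteelLE q p ∧ ∃ τ ∈ q.t, τ <+: ρ ∧ q.h τ = some 0 := by
  have h0α : ∀ γ, some 0 = some γ → γ < α := by rintro γ ⟨⟩; exact hα
  induction ρ using List.reverseRecOn with
  | nil => exact ⟨p.insert [] (some 0) hρ h0α (admitsLeaf_nil p _), insert_le, [], mem_insert_t,
      List.prefix_rfl, insert_h⟩
  | append_singleton l a ih =>
    by_cases hl : l ∈ p.t
    · by_cases hl0 : p.h l = some 0
      · exact ⟨p, .refl p, l, hl, List.prefix_append l [a], hl0⟩
      have hadm : p.AdmitsLeaf (l ++ [a]) (some 0) :=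
        admitsLeaf_of_dropLast (by simpa using hl) (by simpa using tagLT_some_zero hl0)
      exact ⟨p.insert _ _ hρ h0α hadm, insert_le, _, mem_insert_t, List.prefix_rfl, insert_h⟩
    · obtain ⟨q, hqp, τ, hτ, hτl, hτ0⟩ := ih hl
      exact ⟨q, hqp, τ, hτ, hτl.trans (List.prefix_append l [a]), hτ0⟩

theorem forcesIn_of_mem {p : SteelCond α} {σ : List ℕ} (hσ : σ ∈ p.t) : ForcesIn p σ :=
  fun q hq => ⟨q, .refl q, hq.1 hσ⟩

theorem forcesIn_nil (p : SteelCond α) : ForcesIn p [] :=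
  fun q _ => q.exists_le_mem_of_admitsLeaf (by simp) (admitsLeaf_nil q none)

theorem forcesIn_of_dropLast (hα : 0 < α) {p : SteelCond α} {σ : List ℕ} (hd : σ.dropLast ∈ p.t)
    (h0 : p.h σ.dropLast ≠ some 0) : ForcesIn p σ := by
  intro q hq
  refine q.exists_le_mem_of_admitsLeaf (o := some 0) (by rintro γ ⟨⟩; exact hα)
    (admitsLeaf_of_dropLast (hq.1 hd) ?_)
  rw [hq.2 _ hd]
  exact tagLT_some_zero h0

theorem exists_le_forcesOut (hα : 0 < α) {p : SteelCond α} {σ : List ℕ} (hne : σ ≠ [])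
    (h0 : σ.dropLast ∈ p.t → p.h σ.dropLast = some 0) :
    ∃ q : SteelCond α, SteelLE q p ∧ ForcesOut q σ := by
  obtain ⟨q, hqp, τ, hτ, hτσ, hτ0⟩ : ∃ q : SteelCond α, SteelLE q p ∧
      ∃ τ ∈ q.t, τ <+: σ.dropLast ∧ q.h τ = some 0 := by
    by_cases hd : σ.dropLast ∈ p.t
    · exact ⟨p, .refl p, _, hd, List.prefix_rfl, h0 hd⟩
    · exact p.exists_le_tag_eq_zero hα hd
  have hlen : τ.length < σ.length := by
    have := hτσ.length_le
    have := List.length_pos_iff.mpr hne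
    rw [List.length_dropLast] at *
    omega
  exact ⟨q, hqp, q.forcesOut_of_tag_lt hτ (hτσ.trans (List.dropLast_prefix σ)) hτ0
    (by exact_mod_cast Nat.sub_pos_of_lt hlen)⟩

theorem forcesIn_iff (hα : 0 < α) (p : SteelCond α) (σ : List ℕ) :
    ForcesIn p σ ↔
      σ = [] ∨ σ ∈ p.t ∨ (σ ≠ [] ∧ σ.dropLast ∈ p.t ∧ p.h σ.dropLast ≠ some 0) := by
  refine ⟨fun hF => ?_, ?_⟩
  · by_contra! h
    obtain ⟨hne, hσ, h0⟩ := h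
    obtain ⟨q, hqp, hout⟩ := exists_le_forcesOut hα hne (h0 hne)
    obtain ⟨r, hrq, hσr⟩ := hF q hqp
    exact hout r hrq hσr
  · rintro (rfl | hσ | ⟨-, hd, h0⟩)
    exacts [forcesIn_nil p, forcesIn_of_mem hσ, forcesIn_of_dropLast hα hd h0]

theorem forcesOut_iff (p : SteelCond α) (σ : List ℕ) :
    ForcesOut p σ ↔
      ∃ τ ∈ p.t, τ <+: σ ∧ ∃ γ : Ordinal, p.h τ = some γ ∧
        γ < ((σ.length - τ.length : ℕ) : Ordinal) := by
  refine ⟨fun hF => ?_, fun ⟨τ, hτ, hτσ, γ, hγ, hlt⟩ => p.forcesOut_of_tag_lt hτ hτσ hγ hlt⟩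
  by_contra! h
  obtain ⟨r, hrp, hσr, -⟩ := exists_le_mem_of_tags_ge σ 0 p h
  exact hF r hrp hσr

theorem t_eq_of_cut_eq {p q : SteelCond α} {β : Ordinal} (h : p.cut β = q.cut β) : p.t = q.t :=
  congrArg Prod.fst h

theorem h_eq_some_iff_of_cut_eq {p q : SteelCond α} {β γ : Ordinal} (h : p.cut β = q.cut β)
    {s : List ℕ} (hs : s ∈ p.t) (hγ : γ < Ordinal.omega0 * β) :
    p.h s = some γ ↔ q.h s = some γ := by
  have hcut := congrFun (congrArg Prod.snd h) s
  simp only [cut, hs, t_eq_of_cut_eq h ▸ hs, if_true] at hcut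
  have key : ∀ o : Option Ordinal,
      o.bind (fun δ => if δ < Ordinal.omega0 * β then some δ else none) = some γ ↔ o = some γ := by
    rintro (_ | δ) <;> simp only [Option.bind_none, Option.bind_some, reduceCtorEq]
    split_ifs with hδ
    · rfl
    · simp only [false_iff, Option.some.injEq]
      rintro rfl
      exact hδ hγ
  rw [← key, hcut, key]

theorem forcesIn_congr_of_cut_one_eq (hα : 0 < α) {p q : SteelCond α} (h : p.cut 1 = q.cut 1)
    (σ : List ℕ) : ForcesIn p σ ↔ ForcesIn q σ := by
  rw [forcesIn_iff hα, forcesIn_iff hα, ← t_eq_of_cut_eq h]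
  exact or_congr_right <| or_congr_right <| and_congr_right fun _ => and_congr_right fun hd =>
    not_congr (h_eq_some_iff_of_cut_eq h hd (by simp [Ordinal.omega0_pos]))

theorem forcesOut_congr_of_cut_one_eq {p q : SteelCond α} (h : p.cut 1 = q.cut 1)
    (σ : List ℕ) : ForcesOut p σ ↔ ForcesOut q σ := by
  rw [forcesOut_iff, forcesOut_iff, ← t_eq_of_cut_eq h]
  exact exists_congr fun τ => and_congr_right fun hτ => and_congr_right fun _ =>
    exists_congr fun γ => and_congr_left fun hlt =>
      h_eq_some_iff_of_cut_eq h hτ (by simpa using hlt.trans (Ordinal.natCast_lt_omega0 _))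

end SteelCond

/-- Characterization of the atomic forcing relations for the generic tree, and the consequence
that they only depend on `p(1)`: conditions with the same `1`-cut force the same membership
facts (hence the same clopen facts) about the generic tree. -/
theorem steel_atomic_forcing (α : Ordinal) (hα : 0 < α) (p : SteelCond α) :
    (∀ σ : List ℕ, ForcesIn p σ ↔
      (σ = [] ∨ σ ∈ p.t ∨ (σ ≠ [] ∧ σ.dropLast ∈ p.t ∧ p.h σ.dropLast ≠ some 0))) ∧
    (∀ σ : List ℕ, ForcesOut p σ ↔
      ∃ τ : List ℕ, τ ∈ p.t ∧ τ <+: σ ∧ ∃ γ : Ordinal, p.h τ = some γ ∧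
        γ < ((σ.length - τ.length : ℕ) : Ordinal)) ∧
    (∀ q : SteelCond α, p.cut 1 = q.cut 1 →
      ∀ σ : List ℕ, (ForcesIn p σ ↔ ForcesIn q σ) ∧ (ForcesOut p σ ↔ ForcesOut q σ)) :=
  ⟨SteelCond.forcesIn_iff hα p, SteelCond.forcesOut_iff p, fun _ h σ =>
    ⟨SteelCond.forcesIn_congr_of_cut_one_eq hα h σ, SteelCond.forcesOut_congr_of_cut_one_eq h σ⟩⟩
end

section
/- For every countable ordinal α, the set WF_α = {T ⊆ ω^{<ω} : T is a well-founded tree of rank α} is a Borel subset of 2^{ω^{<ω}}. -/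
/-!
The rank of a node `s` of a tree is determined by its immediate successors `s ++ [n]`, since
every strict extension of `s` lies above one of them: `s` has rank `β` iff every successor has
rank `< β` and the successor ranks are cofinal in `β`. For countable `β` this expresses
"`x` is a tree in which `s` has rank `β`" as a countable Boolean combination of the same
conditions for smaller ranks, so it is Borel by induction on `β`. A tree is well-founded as soon
as its root is accessible, because every node extends the root.
-/

open Cardinal Set

/-- A tree on ω: a set of finite sequences closed under initial segments. -/
def IsTree (T : Set (List ℕ)) : Prop := ∀ s ∈ T, ∀ t : List ℕ, t <+: s → t ∈ T

theorem Acc.rank_eq_iff {α : Type*} {r : α → α → Prop} {a : α} (ha : Acc r a)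
    {β : Ordinal} : ha.rank = β ↔ (∀ b (h : r b a), (ha.inv h).rank < β) ∧
      ∀ γ < β, ∃ b, ∃ h : r b a, γ ≤ (ha.inv h).rank := by
  constructor
  · rintro rfl
    refine ⟨fun b h => ha.rank_lt_of_rel h, fun γ hγ => ?_⟩
    rw [ha.rank_eq, Ordinal.lt_iSup_iff] at hγ
    obtain ⟨⟨b, h⟩, hγ⟩ := hγ
    exact ⟨b, h, Order.lt_succ_iff.mp hγ⟩
  · rintro ⟨hlt, hcof⟩
    refine le_antisymm ?_ (le_of_forall_lt fun γ hγ => ?_)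
    · rw [ha.rank_eq]
      exact Ordinal.iSup_le fun b => Order.succ_le_of_lt (hlt b.1 b.2)
    · obtain ⟨b, h, hle⟩ := hcof γ hγ
      exact hle.trans_lt (ha.rank_lt_of_rel h)

lemma Ordinal.countable_Iio_of_lt_ord_aleph_one {β : Ordinal} (hβ : β < (Cardinal.aleph 1).ord) :
    (Iio β).Countable := by
  rw [← Cardinal.le_aleph0_iff_set_countable, Cardinal.mk_Iio_ordinal, Cardinal.lift_le_aleph0,
    ← Order.lt_succ_iff, Cardinal.succ_aleph0]
  exact Cardinal.lt_ord.mp hβ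

namespace TreeRank

variable {x : List ℕ → Bool} {s : List ℕ}

abbrev Node (x : List ℕ → Bool) : Type := {s : List ℕ // x s = true}

abbrev ExtendsStrictly (x : List ℕ → Bool) (a b : Node x) : Prop :=
  b.1 <+: a.1 ∧ a.1 ≠ b.1

def HasRank (x : List ℕ → Bool) (s : List ℕ) (β : Ordinal) : Prop :=
  ∃ h : x s = true, ∃ ha : Acc (ExtendsStrictly x) ⟨s, h⟩, ha.rank = β

lemma extendsStrictly_succ (hs : x s = true) {n : ℕ} (hn : x (s ++ [n]) = true) :
    ExtendsStrictly x ⟨s ++ [n], hn⟩ ⟨s, hs⟩ :=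
  ⟨⟨[n], rfl⟩, by simp⟩

lemma exists_succ_prefix (htree : IsTree {t | x t = true}) {t : List ℕ} (ht : x t = true)
    (hst : s <+: t) (hne : t ≠ s) : ∃ n, x (s ++ [n]) = true ∧ s ++ [n] <+: t := by
  obtain ⟨u, rfl⟩ := hst
  have hu : u ≠ [] := by rintro rfl; simp at hne
  have hp : s ++ [u.head hu] <+: s ++ u :=
    (List.prefix_append_right_inj s).mpr ⟨u.tail, List.cons_head_tail hu⟩
  exact ⟨u.head hu, htree _ ht _ hp, hp⟩

lemma rank_le_of_prefix {a b : Node x} (ha : Acc (ExtendsStrictly x) a)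
    (hb : Acc (ExtendsStrictly x) b) (hba : b.1 <+: a.1) : ha.rank ≤ hb.rank := by
  rcases eq_or_ne a.1 b.1 with hab | hab
  · obtain rfl : a = b := Subtype.ext hab
    exact le_rfl
  · exact (hb.rank_lt_of_rel ⟨hba, hab⟩).le

lemma acc_of_forall_succ (htree : IsTree {t | x t = true}) (hs : x s = true)
    (H : ∀ n (hn : x (s ++ [n]) = true), Acc (ExtendsStrictly x) ⟨s ++ [n], hn⟩) :
    Acc (ExtendsStrictly x) ⟨s, hs⟩ := by
  refine ⟨_, fun ⟨t, ht⟩ ⟨hst, hne⟩ => ?_⟩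
  obtain ⟨n, hn, hnt⟩ := exists_succ_prefix htree ht hst hne
  rcases eq_or_ne t (s ++ [n]) with rfl | hne'
  · exact H n ht
  · exact (H n hn).inv ⟨hnt, hne'⟩

theorem rank_eq_iff_succ (htree : IsTree {t | x t = true}) (hs : x s = true)
    (ha : Acc (ExtendsStrictly x) ⟨s, hs⟩) {β : Ordinal} :
    ha.rank = β ↔
      (∀ n (hn : x (s ++ [n]) = true), (ha.inv (extendsStrictly_succ hs hn)).rank < β) ∧
      ∀ γ < β, ∃ n, ∃ hn : x (s ++ [n]) = true,
        γ ≤ (ha.inv (extendsStrictly_succ hs hn)).rank := by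
  rw [ha.rank_eq_iff]
  refine and_congr ⟨fun H n hn => H _ (extendsStrictly_succ hs hn), fun H => ?_⟩
    (forall₂_congr fun γ _ => ⟨fun ⟨⟨t, ht⟩, h, hγ⟩ => ?_,
      fun ⟨n, hn, hγ⟩ => ⟨_, extendsStrictly_succ hs hn, hγ⟩⟩)
  · rintro ⟨t, ht⟩ h
    obtain ⟨n, hn, hnt⟩ := exists_succ_prefix htree ht h.1 h.2
    exact (rank_le_of_prefix _ _ hnt).trans_lt (H n hn)
  · obtain ⟨n, hn, hnt⟩ := exists_succ_prefix htree ht h.1 h.2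
    exact ⟨n, hn, hγ.trans (rank_le_of_prefix _ _ hnt)⟩

theorem hasRank_iff (htree : IsTree {t | x t = true}) {β : Ordinal} :
    HasRank x s β ↔ x s = true ∧
      (∀ n, x (s ++ [n]) = true → ∃ γ : Iio β, HasRank x (s ++ [n]) γ) ∧
      ∀ γ : Iio β, ∃ n, ∃ δ : Iio β, γ ≤ δ ∧ HasRank x (s ++ [n]) δ := by
  constructor
  · rintro ⟨hs, ha, hrank⟩
    obtain ⟨hlt, hcof⟩ := (rank_eq_iff_succ htree hs ha).mp hrank
    refine ⟨hs, fun n hn => ⟨⟨_, hlt n hn⟩, hn, _, rfl⟩, fun ⟨γ, hγ⟩ => ?_⟩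
    obtain ⟨n, hn, hle⟩ := hcof γ hγ
    exact ⟨n, ⟨_, hlt n hn⟩, hle, hn, _, rfl⟩
  · rintro ⟨hs, hsucc, hcof⟩
    have ha := acc_of_forall_succ htree hs fun n hn => by
      obtain ⟨_, _, hacc, _⟩ := hsucc n hn
      exact hacc
    refine ⟨hs, ha, (rank_eq_iff_succ htree hs ha).mpr ⟨fun n hn => ?_, fun γ hγ => ?_⟩⟩
    · obtain ⟨⟨γ, hγ⟩, _, _, rfl⟩ := hsucc n hn
      exact hγ
    · obtain ⟨n, ⟨_, _⟩, hγδ, hn, _, rfl⟩ := hcof ⟨γ, hγ⟩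
      exact ⟨n, hn, hγδ⟩

lemma wellFounded_of_acc_nil {hr : x [] = true} (ha : Acc (ExtendsStrictly x) ⟨[], hr⟩) :
    WellFounded (ExtendsStrictly x) := by
  refine ⟨fun ⟨t, ht⟩ => ?_⟩
  rcases eq_or_ne t [] with rfl | hne
  · exact ha
  · exact ha.inv ⟨List.nil_prefix, hne⟩

lemma measurable_isTree : Measurable fun x : List ℕ → Bool => IsTree {t | x t = true} := by
  unfold IsTree
  fun_prop

theorem measurable_isTree_and_hasRank {β : Ordinal} (hβ : β < (Cardinal.aleph 1).ord)
    (s : List ℕ) :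
    Measurable fun x : List ℕ → Bool => IsTree {t | x t = true} ∧ HasRank x s β := by
  induction β using WellFoundedLT.induction generalizing s with
  | _ β ih =>
  have : Countable (Iio β) := (Ordinal.countable_Iio_of_lt_ord_aleph_one hβ).to_subtype
  have hsucc_meas : ∀ γ : Iio β, ∀ t, Measurable fun x : List ℕ → Bool =>
      IsTree {t | x t = true} ∧ HasRank x t γ := fun γ t => ih γ γ.2 (γ.2.trans hβ) t
  have hrec : (fun x : List ℕ → Bool => IsTree {t | x t = true} ∧ HasRank x s β) = fun x =>
      IsTree {t | x t = true} ∧ x s = true ∧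
      (∀ n, x (s ++ [n]) = true →
        ∃ γ : Iio β, IsTree {t | x t = true} ∧ HasRank x (s ++ [n]) γ) ∧
      ∀ γ : Iio β, ∃ n, ∃ δ : Iio β,
        γ ≤ δ ∧ IsTree {t | x t = true} ∧ HasRank x (s ++ [n]) δ := by
    funext x
    by_cases htree : IsTree {t | x t = true}
    · rw [hasRank_iff htree]
      simp only [htree, true_and]
    · simp [htree]
  have htree_meas := measurable_isTree
  rw [hrec]
  fun_prop

end TreeRank

/-- For every countable ordinal α, the set of (characteristic functions of) well-founded trees
`T ⊆ ω^{<ω}` of rank exactly α is a Borel subset of `2^{ω^{<ω}}`.  Well-foundedness is the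
well-foundedness of the strict-extension relation, and the rank of the tree is the rank of the
root `⟨⟩` under that relation. -/
theorem wf_alpha_borel (α : Ordinal) (hα : α < (Cardinal.aleph 1).ord) :
    MeasurableSet {x : List ℕ → Bool |
      IsTree {s : List ℕ | x s = true} ∧
      ∃ hr : x [] = true,
      ∃ hw : WellFounded (fun a b : {s : List ℕ // x s = true} => b.1 <+: a.1 ∧ a.1 ≠ b.1),
        (hw.apply ⟨[], hr⟩).rank = α} := by
  convert (TreeRank.measurable_isTree_and_hasRank hα []).setOf using 1
  ext x
  refine and_congr_right fun _ => exists_congr fun hr => ?_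
  exact ⟨fun ⟨hw, h⟩ => ⟨hw.apply _, h⟩,
    fun ⟨ha, h⟩ => ⟨TreeRank.wellFounded_of_acc_nil ha, h⟩⟩
end
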